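/- arXiv:2605.18750 — 2 statements merged into one kernel-verified Lean document; each statement's English description precedes it below -/
import Mathlib

section
/- Let D : ℕ × ℕ → ℝ≥0 and Δ : ℕ × ℕ → ℝ≥0, and let K : ℕ × ℕ → Finset ℕ with weights w : ℕ → ℝ≥0. Suppose for all (i,j) with i,j ≥ 1: (1) D(i,j) ≤ max{D(i−1,j), D(i,j−1)} + Δ(i,j); (2) K(i−1,j) ⊆ K(i,j) and K(i,j−1) ⊆ K(i,j); (3) if Δ(i,j) > 0 there exists q ∈ K(i,j) with q ∉ K(i−1,j) ∪ K(i,j−1) and Δ(i,j) ≤ w(q); (4) the base cases satisfy D(0,j) ≤ ∑_{k ∈ K(0,j)} w(k) and D(i,0) ≤ ∑_{k ∈ K(i,0)} w(k). Then D(i,j) ≤ ∑_{k ∈ K(i,j)} w(k) for all i, j. -/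
/-- Abstract induction underlying the forward-delay lemma: delays are bounded by
the total weight of the inserted-task sets `K`. -/
theorem forward_delay_induction (D Δ : ℕ × ℕ → NNReal) (K : ℕ × ℕ → Finset ℕ)
    (w : ℕ → NNReal)
    (hrec : ∀ i j, 1 ≤ i → 1 ≤ j →
      D (i, j) ≤ max (D (i - 1, j)) (D (i, j - 1)) + Δ (i, j))
    (hK : ∀ i j, 1 ≤ i → 1 ≤ j → K (i - 1, j) ⊆ K (i, j) ∧ K (i, j - 1) ⊆ K (i, j))
    (hcharge : ∀ i j, 1 ≤ i → 1 ≤ j → 0 < Δ (i, j) →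
      ∃ q ∈ K (i, j), q ∉ K (i - 1, j) ∪ K (i, j - 1) ∧ Δ (i, j) ≤ w q)
    (hbase_row : ∀ j, D (0, j) ≤ ∑ k ∈ K (0, j), w k)
    (hbase_col : ∀ i, D (i, 0) ≤ ∑ k ∈ K (i, 0), w k) :
    ∀ i j, D (i, j) ≤ ∑ k ∈ K (i, j), w k := by
  suffices h : ∀ n i j, i + j = n → D (i, j) ≤ ∑ k ∈ K (i, j), w k from
    fun i j => h (i + j) i j rfl
  intro n
  induction n using Nat.strong_induction_on with
  | _ n ih =>
    intro i j hn
    subst hn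
    rcases Nat.eq_zero_or_pos i with hi | hi
    · subst hi; exact hbase_row j
    rcases Nat.eq_zero_or_pos j with hj | hj
    · subst hj; exact hbase_col i
    have h1 : D (i - 1, j) ≤ ∑ k ∈ K (i - 1, j), w k :=
      ih (i - 1 + j) (by omega) _ _ rfl
    have h2 : D (i, j - 1) ≤ ∑ k ∈ K (i, j - 1), w k :=
      ih (i + (j - 1)) (by omega) _ _ rfl
    obtain ⟨hK1, hK2⟩ := hK i j hi hj
    rcases eq_zero_or_pos (Δ (i, j)) with hΔ | hΔ
    · calc D (i, j) ≤ max (D (i - 1, j)) (D (i, j - 1)) + Δ (i, j) := hrec i j hi hj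
        _ = max (D (i - 1, j)) (D (i, j - 1)) := by rw [hΔ, add_zero]
        _ ≤ ∑ k ∈ K (i, j), w k := by
            apply max_le
            · exact h1.trans (Finset.sum_le_sum_of_subset hK1)
            · exact h2.trans (Finset.sum_le_sum_of_subset hK2)
    · obtain ⟨q, hqK, hqfresh, hqw⟩ := hcharge i j hi hj hΔ
      simp only [Finset.mem_union, not_or] at hqfresh
      have hsub1 : K (i - 1, j) ⊆ (K (i, j)).erase q := fun x hx =>
        Finset.mem_erase.2 ⟨fun h => hqfresh.1 (h ▸ hx), hK1 hx⟩
      have hsub2 : K (i, j - 1) ⊆ (K (i, j)).erase q := fun x hx =>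
        Finset.mem_erase.2 ⟨fun h => hqfresh.2 (h ▸ hx), hK2 hx⟩
      calc D (i, j) ≤ max (D (i - 1, j)) (D (i, j - 1)) + Δ (i, j) := hrec i j hi hj
        _ ≤ (∑ k ∈ (K (i, j)).erase q, w k) + w q := by
            apply add_le_add _ hqw
            apply max_le
            · exact h1.trans (Finset.sum_le_sum_of_subset hsub1)
            · exact h2.trans (Finset.sum_le_sum_of_subset hsub2)
        _ = ∑ k ∈ K (i, j), w k := by
            rw [add_comm, Finset.add_sum_erase _ _ hqK]
end

section
/- Let D : ℕ × ℕ → ℝ≥0 satisfy, for i decreasing from N−1 and j increasing (backward pipeline orientation): D(N−1,0) = 0; D(i,0) ≤ D(i+1,0) + Δ(i,0) for i < N−1; D(N−1,j) ≤ ∑_{k ∈ J(N−1,j)} w(k); and D(i,j) ≤ max{D(i+1,j), D(i,j−1)} + Δ(i,j) for i < N−1, j > 0. Assume J(i+1,j) ⊆ J(i,j), J(i,j−1) ⊆ J(i,j), and whenever Δ(i,j) > 0 there exists q ∈ J(i,j) \ (J(i+1,j) ∪ J(i,j−1)) with Δ(i,j) ≤ w(q). Then D(i,j) ≤ ∑_{k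 ∈ J(i,j)} w(k) for all i, j. -/
/-!
Each recursion step adds `Δ(i,j)` to a delay already bounded by the weight of
`J(i+1,j) ∪ J(i,j-1)`, and `Δ(i,j)` is paid for by a microbatch `q ∈ J(i,j)` lying outside
that union, so the weight of `J(i,j)` covers both. Induct on `j`, and for fixed `j` downwards
on `i` starting from the last stage `N - 1`.
-/

open Finset

section ChargedSum

variable {ι M : Type*} [AddCommMonoid M] {s t : Finset ι} {w : ι → M} {a b Δ : M}

theorem Finset.add_le_sum_of_charged [PartialOrder M] [CanonicallyOrderedAdd M]
    [IsOrderedAddMonoid M] (hst : s ⊆ t) (ha : a ≤ ∑ k ∈ s, w k)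
    (hcharge : 0 < Δ → ∃ q ∈ t, Δ ≤ w q ∧ q ∉ s) : a + Δ ≤ ∑ k ∈ t, w k := by
  classical
  rcases (zero_le : 0 ≤ Δ).eq_or_lt with hΔ | hΔ
  · rw [← hΔ, add_zero]
    exact ha.trans (sum_le_sum_of_subset hst)
  · obtain ⟨q, hqt, hΔq, hqs⟩ := hcharge hΔ
    calc a + Δ ≤ ∑ k ∈ s, w k + w q := add_le_add ha hΔq
      _ = ∑ k ∈ insert q s, w k := by rw [sum_insert hqs, add_comm]
      _ ≤ ∑ k ∈ t, w k := sum_le_sum_of_subset (insert_subset hqt hst)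

theorem Finset.max_le_sum_union [LinearOrder M] [CanonicallyOrderedAdd M]
    [IsOrderedAddMonoid M] [DecidableEq ι] (ha : a ≤ ∑ k ∈ s, w k) (hb : b ≤ ∑ k ∈ t, w k) :
    max a b ≤ ∑ k ∈ s ∪ t, w k :=
  max_le (ha.trans (sum_le_sum_of_subset subset_union_left))
    (hb.trans (sum_le_sum_of_subset subset_union_right))

end ChargedSum

theorem backward_delay_induction_general (N : ℕ)
    (D Δ : ℕ × ℕ → NNReal) (J : ℕ × ℕ → Finset ℕ) (w : ℕ → NNReal)
    (hcol : ∀ i, i + 1 < N → D (i, 0) ≤ D (i + 1, 0) + Δ (i, 0))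
    (hlastrow : ∀ j, D (N - 1, j) ≤ ∑ k ∈ J (N - 1, j), w k)
    (hrec : ∀ i j, i + 1 < N → 1 ≤ j →
      D (i, j) ≤ max (D (i + 1, j)) (D (i, j - 1)) + Δ (i, j))
    (hJ1 : ∀ i j, i + 1 < N → J (i + 1, j) ⊆ J (i, j))
    (hJ2 : ∀ i j, 1 ≤ j → J (i, j - 1) ⊆ J (i, j))
    (hcharge : ∀ i j, i + 1 < N → 0 < Δ (i, j) →
      ∃ q ∈ J (i, j), Δ (i, j) ≤ w q ∧ q ∉ J (i + 1, j) ∧ (1 ≤ j → q ∉ J (i, j - 1))) :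
    ∀ i < N, ∀ j, D (i, j) ≤ ∑ k ∈ J (i, j), w k := by
  intro i hi j
  induction j generalizing i with
  | zero =>
    induction Nat.le_sub_one_of_lt hi using Nat.decreasingInduction with
    | self => exact hlastrow 0
    | of_succ i hi' ih =>
      have hi1 : i + 1 < N := by omega
      refine (hcol i hi1).trans (add_le_sum_of_charged (hJ1 i 0 hi1) (ih hi1) fun hΔ => ?_)
      obtain ⟨q, hq, hΔq, hq1, -⟩ := hcharge i 0 hi1 hΔ
      exact ⟨q, hq, hΔq, hq1⟩
  | succ j ihj =>
    induction Nat.le_sub_one_of_lt hi using Nat.decreasingInduction with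
    | self => exact hlastrow (j + 1)
    | of_succ i hi' ih =>
      have hi1 : i + 1 < N := by omega
      refine (hrec i (j + 1) hi1 le_add_self).trans (add_le_sum_of_charged
        (union_subset (hJ1 i (j + 1) hi1) (hJ2 i (j + 1) le_add_self))
        (max_le_sum_union (ih hi1) (ihj i (by omega))) fun hΔ => ?_)
      obtain ⟨q, hq, hΔq, hq1, hq2⟩ := hcharge i (j + 1) hi1 hΔ
      exact ⟨q, hq, hΔq, notMem_union.2 ⟨hq1, hq2 le_add_self⟩⟩

/-- Abstract induction behind the backward-delay lemma: delays of backward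
pipeline tasks are bounded by the total weight of the inserted forward
microbatch sets `J`, by induction on `(N−1−i) + j`. -/
theorem backward_delay_induction (N : ℕ) (hN : 0 < N)
    (D Δ : ℕ × ℕ → NNReal) (J : ℕ × ℕ → Finset ℕ) (w : ℕ → NNReal)
    (hbase : D (N - 1, 0) = 0)
    (hcol : ∀ i, i + 1 < N → D (i, 0) ≤ D (i + 1, 0) + Δ (i, 0))
    (hlastrow : ∀ j, D (N - 1, j) ≤ ∑ k ∈ J (N - 1, j), w k)
    (hrec : ∀ i j, i + 1 < N → 1 ≤ j →
      D (i, j) ≤ max (D (i + 1, j)) (D (i, j - 1)) + Δ (i, j))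
    (hJ1 : ∀ i j, i + 1 < N → J (i + 1, j) ⊆ J (i, j))
    (hJ2 : ∀ i j, 1 ≤ j → J (i, j - 1) ⊆ J (i, j))
    (hcharge : ∀ i j, i + 1 < N → 0 < Δ (i, j) →
      ∃ q ∈ J (i, j), Δ (i, j) ≤ w q ∧ q ∉ J (i + 1, j) ∧ (1 ≤ j → q ∉ J (i, j - 1))) :
    ∀ i < N, ∀ j, D (i, j) ≤ ∑ k ∈ J (i, j), w k :=
  backward_delay_induction_general N D Δ J w hcol hlastrow hrec hJ1 hJ2 hcharge
end
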